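/- Let H be the graph constructed from G and ℓ, with target sets X and Y of size ℓ, and let k_c ∈ ℕ. If opt(G) ≤ k_c, then opt_H(X ⇝ Y) ≤ k_c + ℓ. -/

import Mathlib

namespace TSS

variable {V : Type*}

/-- The set of active vertices after `i` steps of the activation process started from `S`. -/
def activeAt (G : SimpleGraph V) (τ : V → ℕ) (S : Set V) : ℕ → Set V
  | 0 => S
  | i + 1 => activeAt G τ S i ∪ { v | τ v ≤ (G.neighborSet v ∩ activeAt G τ S i).ncard }

/-- The active vertex set `𝒜(S) = ⋃ i, 𝒜ⁱ(S)`. -/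
def activeSet (G : SimpleGraph V) (τ : V → ℕ) (S : Set V) : Set V :=
  ⋃ i, activeAt G τ S i

/-- `S` is a target set for `(G, τ)` if it activates every vertex. -/
def IsTargetSet (G : SimpleGraph V) (τ : V → ℕ) (S : Set V) : Prop :=
  activeSet G τ S = Set.univ

/-- Minimum size of a target set. -/
noncomputable def optTS (G : SimpleGraph V) (τ : V → ℕ) : ℕ :=
  sInf { m | ∃ S : Set V, IsTargetSet G τ S ∧ S.ncard = m }

/-- A reconfiguration sequence `Sfam 0 = X, …, Sfam T = Y` of target sets where
consecutive sets differ in exactly one vertex. -/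
structure IsReconfSeq (G : SimpleGraph V) (τ : V → ℕ) (X Y : Set V) (T : ℕ)
    (Sfam : ℕ → Set V) : Prop where
  head : Sfam 0 = X
  last : Sfam T = Y
  target : ∀ t ≤ T, IsTargetSet G τ (Sfam t)
  step : ∀ t < T, (symmDiff (Sfam t) (Sfam (t + 1))).ncard = 1

/-- The size of a reconfiguration sequence: maximum cardinality of any member. -/
noncomputable def seqSize (T : ℕ) (Sfam : ℕ → Set V) : ℕ :=
  (Finset.range (T + 1)).sup fun t => (Sfam t).ncard

/-- `opt_G(X ⇝ Y)`: minimum size over all reconfiguration sequences from `X` to `Y`. -/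
noncomputable def optReconf (G : SimpleGraph V) (τ : V → ℕ) (X Y : Set V) : ℕ :=
  sInf { m | ∃ T Sfam, IsReconfSeq G τ X Y T Sfam ∧ seqSize T Sfam = m }

/-- The four internal vertices of a one-way gadget. -/
inductive GadVert where | t | h | b1 | b2

/-- Index set of the one-way gadgets of the graph `H` built from `G` (with degree
function `d`) and `ℓ`. -/
inductive GadIdx (V : Type*) (ℓ : ℕ) (d : V → ℕ) where
  | vx (v : V) (i : Fin ℓ)
  | xa (i : Fin ℓ) (v : V) (j : Fin (d v))
  | av (v : V) (j : Fin (d v))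
  | vy (v : V) (i : Fin ℓ)
  | yb (i : Fin ℓ) (v : V) (j : Fin (d v))
  | bv (v : V) (j : Fin (d v))

/-- Vertices of the graph `H`: a copy of `V`, the sets `X`, `Y`, `A`, `B`, and the
internal vertices of all one-way gadgets. -/
inductive HVert (V : Type*) (ℓ : ℕ) (d : V → ℕ) where
  | orig (v : V)
  | xx (i : Fin ℓ)
  | yy (i : Fin ℓ)
  | aa (v : V) (j : Fin (d v))
  | bb (v : V) (j : Fin (d v))
  | gad (D : GadIdx V ℓ d) (w : GadVert)

variable {ℓ : ℕ} {d : V → ℕ}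

/-- The tail of a one-way gadget. -/
def gadTail : GadIdx V ℓ d → HVert V ℓ d
  | .vx v _ => .orig v
  | .xa i _ _ => .xx i
  | .av v j => .aa v j
  | .vy v _ => .orig v
  | .yb i _ _ => .yy i
  | .bv v j => .bb v j

/-- The head of a one-way gadget. -/
def gadHead : GadIdx V ℓ d → HVert V ℓ d
  | .vx _ i => .xx i
  | .xa _ v j => .aa v j
  | .av v _ => .orig v
  | .vy _ i => .yy i
  | .yb _ v j => .bb v j
  | .bv v _ => .orig v

/-- Base edge relation of the graph `H`. -/
def HRel (G : SimpleGraph V) (ℓ : ℕ) (d : V → ℕ) : HVert V ℓ d → HVert V ℓ d → Prop :=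
  fun p q =>
    (∃ u v, G.Adj u v ∧ p = .orig u ∧ q = .orig v) ∨
    (∃ D, p = .gad D .t ∧ (q = .gad D .b1 ∨ q = .gad D .b2)) ∨
    (∃ D, p = .gad D .h ∧ (q = .gad D .b1 ∨ q = .gad D .b2)) ∨
    (∃ D, p = gadTail D ∧ q = .gad D .t) ∨
    (∃ D, p = gadHead D ∧ q = .gad D .h)

/-- The graph `H` constructed from `G` (with degree function `d`) and `ℓ`. -/
def graphH (G : SimpleGraph V) (ℓ : ℕ) (d : V → ℕ) : SimpleGraph (HVert V ℓ d) :=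
  SimpleGraph.fromRel (HRel G ℓ d)

/-- The threshold function `τ'` of `H`, where `n` is the number of vertices of `G`. -/
def tauH (τ : V → ℕ) (n ℓ : ℕ) (d : V → ℕ) : HVert V ℓ d → ℕ
  | .orig v => τ v
  | .xx _ => n
  | .yy _ => n
  | .aa _ _ => ℓ
  | .bb _ _ => ℓ
  | .gad _ .t => 1
  | .gad _ .b1 => 1
  | .gad _ .b2 => 1
  | .gad _ .h => 2

/-- The vertex set `X = {x₁, …, x_ℓ}` of `H`. -/
def XSet (V : Type*) (ℓ : ℕ) (d : V → ℕ) : Set (HVert V ℓ d) := Set.range HVert.xx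

/-- The vertex set `Y = {y₁, …, y_ℓ}` of `H`. -/
def YSet (V : Type*) (ℓ : ℕ) (d : V → ℕ) : Set (HVert V ℓ d) := Set.range HVert.yy

/-- The copy of `V` inside `V(H)`. -/
def OrigSet (V : Type*) (ℓ : ℕ) (d : V → ℕ) : Set (HVert V ℓ d) := Set.range HVert.orig

/-- The vertex set `A = {a_{v,j}}` of `H`. -/
def ASet (V : Type*) (ℓ : ℕ) (d : V → ℕ) : Set (HVert V ℓ d) :=
  { p | ∃ v j, p = HVert.aa v j }

/-- The vertex set `B = {b_{v,j}}` of `H`. -/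
def BSet (V : Type*) (ℓ : ℕ) (d : V → ℕ) : Set (HVert V ℓ d) :=
  { p | ∃ v j, p = HVert.bb v j }

end TSS

/-!
Any superset of a target set is a target set, so a target set `P` can be reconfigured into a
target set `Q` by adding the elements of `Q` one at a time and then deleting those of `P`, never
exceeding `|P ∪ Q|`. Taking the copy `S` in `H` of a target set of `G` of size at most `k_c`, it
therefore suffices that `X`, `S` and `Y` are target sets of `H`, since `|X ∪ S|, |S ∪ Y| ≤ k_c + ℓ`.
Once all of `V` is active in `H`, the one-way gadgets successively activate `X` and `Y`
(threshold `n`), then `A` and `B` (threshold `ℓ`), and all gadget vertices; once `X` is active,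
`A` and then `V` follow (the `d_v` gadgets into `v` meet `τ(v) ≤ d_v`), and likewise from `Y`.
Activation in `G` is copied verbatim into `H`, so `S` activates `V`.
-/

namespace TSS

section Activation

variable {W : Type*} (G : SimpleGraph W) (τ : W → ℕ)

theorem activeAt_mono (S : Set W) : Monotone (activeAt G τ S) :=
  monotone_nat_of_le_succ fun _ => Set.subset_union_left

theorem subset_activeSet (S : Set W) : S ⊆ activeSet G τ S :=
  Set.subset_iUnion (activeAt G τ S) 0

theorem exists_subset_activeAt {S F : Set W} (hF : F.Finite) (h : F ⊆ activeSet G τ S) :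
    ∃ i, F ⊆ activeAt G τ S i := by
  simpa using (activeAt_mono G τ S).directed_le.exists_mem_subset_of_finset_subset_biUnion
    (s := hF.toFinset) (by simpa [activeSet] using h)

theorem image_activeSet_subset {W' : Type*} [Finite W'] {G' : SimpleGraph W'} {τ' : W' → ℕ}
    (f : G →g G') (hf : Function.Injective f) (hτ : ∀ v, τ' (f v) ≤ τ v) (S : Set W) :
    f '' activeSet G τ S ⊆ activeSet G' τ' (f '' S) := by
  suffices ∀ i, f '' activeAt G τ S i ⊆ activeAt G' τ' (f '' S) i by
    simpa only [activeSet, Set.image_iUnion] using Set.iUnion_mono this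
  intro i
  induction i with
  | zero => exact subset_rfl
  | succ i ih =>
    rintro _ ⟨u, hu | hu, rfl⟩
    · exact Or.inl (ih ⟨u, hu, rfl⟩)
    · refine Or.inr ((hτ u).trans (hu.trans ?_))
      rw [← Set.ncard_image_of_injective _ hf]
      refine Set.ncard_le_ncard ?_
      rintro _ ⟨w, ⟨huw, hw⟩, rfl⟩
      exact ⟨f.map_rel huw, ih ⟨w, hw, rfl⟩⟩

variable [Finite W]

theorem activeAt_subset_activeAt {S S' : Set W} (h : S ⊆ S') (i : ℕ) :
    activeAt G τ S i ⊆ activeAt G τ S' i := by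
  induction i with
  | zero => exact h
  | succ i ih =>
    rintro x (hx | hx)
    · exact Or.inl (ih hx)
    · exact Or.inr (hx.trans (Set.ncard_le_ncard (Set.inter_subset_inter_right _ ih)))

theorem activeSet_mono {S S' : Set W} (h : S ⊆ S') : activeSet G τ S ⊆ activeSet G τ S' :=
  Set.iUnion_mono (activeAt_subset_activeAt G τ h)

variable {G τ} in
theorem IsTargetSet.mono {S S' : Set W} (hS : IsTargetSet G τ S) (h : S ⊆ S') :
    IsTargetSet G τ S' :=
  Set.eq_univ_of_univ_subset (hS ▸ activeSet_mono G τ h)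

theorem mem_activeSet_of_le_ncard {S F : Set W} {p : W} (hF : F ⊆ activeSet G τ S)
    (hadj : F ⊆ G.neighborSet p) (hτ : τ p ≤ F.ncard) : p ∈ activeSet G τ S := by
  obtain ⟨i, hi⟩ := exists_subset_activeAt G τ (Set.toFinite F) hF
  exact Set.mem_iUnion.2
    ⟨i + 1, Or.inr (hτ.trans (Set.ncard_le_ncard (Set.subset_inter hadj hi)))⟩

theorem mem_activeSet_of_adj {S : Set W} {p q : W} (hq : q ∈ activeSet G τ S) (hadj : G.Adj p q)
    (hτ : τ p ≤ 1) : p ∈ activeSet G τ S :=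
  mem_activeSet_of_le_ncard G τ (Set.singleton_subset_iff.2 hq) (Set.singleton_subset_iff.2 hadj)
    (by rwa [Set.ncard_singleton])

theorem mem_activeSet_of_injective {ι : Type*} {S : Set W} {p : W} (f : ι → W)
    (hf : Function.Injective f) (hact : ∀ i, f i ∈ activeSet G τ S) (hadj : ∀ i, G.Adj p (f i))
    (hτ : τ p ≤ Nat.card ι) : p ∈ activeSet G τ S :=
  mem_activeSet_of_le_ncard G τ (Set.range_subset_iff.2 hact) (Set.range_subset_iff.2 hadj)
    (by rwa [Set.ncard_range_of_injective hf])

end Activation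

theorem exists_isTargetSet_ncard_le {V : Type*} {G : SimpleGraph V} {τ : V → ℕ} {k : ℕ}
    (h : optTS G τ ≤ k) : ∃ S, IsTargetSet G τ S ∧ S.ncard ≤ k := by
  have hne : {m | ∃ S : Set V, IsTargetSet G τ S ∧ S.ncard = m}.Nonempty :=
    ⟨_, Set.univ, Set.eq_univ_of_univ_subset (subset_activeSet G τ _), rfl⟩
  obtain ⟨S, hS, hcard⟩ := Nat.sInf_mem hne
  exact ⟨S, hS, hcard.trans_le h⟩

section Reconfiguration

variable {W : Type*} {G : SimpleGraph W} {τ : W → ℕ}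

theorem seqSize_le_iff {T k : ℕ} {Sfam : ℕ → Set W} :
    seqSize T Sfam ≤ k ↔ ∀ t ≤ T, (Sfam t).ncard ≤ k := by
  simp [seqSize]

variable (G τ) in
def ReconfWithin (k : ℕ) (P Q : Set W) : Prop :=
  ∃ T Sfam, IsReconfSeq G τ P Q T Sfam ∧ seqSize T Sfam ≤ k

namespace ReconfWithin

variable {k k' : ℕ} {P Q R : Set W}

theorem refl (hP : IsTargetSet G τ P) (hk : P.ncard ≤ k) : ReconfWithin G τ k P P :=
  ⟨0, fun _ => P, ⟨rfl, rfl, fun _ _ => hP, fun _ h => absurd h (Nat.not_lt_zero _)⟩,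
    seqSize_le_iff.2 fun _ _ => hk⟩

theorem single (hP : IsTargetSet G τ P) (hQ : IsTargetSet G τ Q) (hPQ : (symmDiff P Q).ncard = 1)
    (hkP : P.ncard ≤ k) (hkQ : Q.ncard ≤ k) : ReconfWithin G τ k P Q := by
  refine ⟨1, fun t => if t = 0 then P else Q, ⟨rfl, rfl, ?_, ?_⟩, seqSize_le_iff.2 ?_⟩
  · intro t _
    split_ifs
    exacts [hP, hQ]
  · intro t ht
    obtain rfl : t = 0 := by omega
    exact hPQ
  · intro t _
    split_ifs
    exacts [hkP, hkQ]

theorem mono (h : ReconfWithin G τ k P Q) (hk : k ≤ k') : ReconfWithin G τ k' P Q :=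
  let ⟨T, Sfam, hseq, hsize⟩ := h
  ⟨T, Sfam, hseq, hsize.trans hk⟩

theorem symm (h : ReconfWithin G τ k P Q) : ReconfWithin G τ k Q P := by
  obtain ⟨T, Sfam, hseq, hsize⟩ := h
  refine ⟨T, fun t => Sfam (T - t), ⟨by simpa using hseq.last, by simpa using hseq.head,
    fun t _ => hseq.target _ (Nat.sub_le T t), fun t ht => ?_⟩, seqSize_le_iff.2 ?_⟩
  · rw [show T - t = T - (t + 1) + 1 by omega, symmDiff_comm]
    exact hseq.step _ (by omega)
  · exact fun t _ => seqSize_le_iff.1 hsize _ (Nat.sub_le T t)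

theorem trans (h₁ : ReconfWithin G τ k P Q) (h₂ : ReconfWithin G τ k Q R) :
    ReconfWithin G τ k P R := by
  obtain ⟨T₁, S₁, hseq₁, hsize₁⟩ := h₁
  obtain ⟨T₂, S₂, hseq₂, hsize₂⟩ := h₂
  set S : ℕ → Set W := fun t => if t ≤ T₁ then S₁ t else S₂ (t - T₁)
  have hleft : ∀ t ≤ T₁, S t = S₁ t := fun t ht => if_pos ht
  have hright : ∀ t, T₁ ≤ t → S t = S₂ (t - T₁) := by
    intro t ht
    rcases ht.eq_or_lt with rfl | ht
    · rw [hleft _ le_rfl, hseq₁.last, Nat.sub_self, hseq₂.head]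
    · exact if_neg (by omega)
  refine ⟨T₁ + T₂, S, ⟨?_, ?_, fun t ht => ?_, fun t ht => ?_⟩, seqSize_le_iff.2 fun t ht => ?_⟩
  · rw [hleft 0 (Nat.zero_le _), hseq₁.head]
  · rw [hright _ (Nat.le_add_right _ _), Nat.add_sub_cancel_left, hseq₂.last]
  · rcases le_total t T₁ with h | h
    · rw [hleft t h]; exact hseq₁.target t h
    · rw [hright t h]; exact hseq₂.target _ (by omega)
  · rcases lt_or_ge t T₁ with h | h
    · rw [hleft t h.le, hleft (t + 1) h]; exact hseq₁.step t h
    · rw [hright t h, hright (t + 1) (by omega), show t + 1 - T₁ = t - T₁ + 1 by omega]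
      exact hseq₂.step _ (by omega)
  · rcases le_total t T₁ with h | h
    · rw [hleft t h]; exact seqSize_le_iff.1 hsize₁ t h
    · rw [hright t h]; exact seqSize_le_iff.1 hsize₂ _ (by omega)

end ReconfWithin

theorem optReconf_le {k : ℕ} {P Q : Set W} (h : ReconfWithin G τ k P Q) :
    optReconf G τ P Q ≤ k :=
  let ⟨T, Sfam, hseq, hsize⟩ := h
  le_trans (Nat.sInf_le ⟨T, Sfam, hseq, rfl⟩) hsize

variable [Finite W] {P Q : Set W}

theorem reconfWithin_of_subset (hP : IsTargetSet G τ P) (hPQ : P ⊆ Q) :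
    ReconfWithin G τ Q.ncard P Q := by
  refine ((Set.toFinite Q).induction_to (C := fun s => P ⊆ s ∧ ReconfWithin G τ Q.ncard P s) P hPQ
    ⟨subset_rfl, .refl hP (Set.ncard_le_ncard hPQ)⟩ ?_).2
  rintro s hsQ ⟨hPs, hs⟩
  obtain ⟨a, haQ, has⟩ := Set.exists_of_ssubset hsQ
  have hstep : (symmDiff s (insert a s)).ncard = 1 := by
    rw [symmDiff_of_le (Set.subset_insert a s), Set.insert_sdiff_of_notMem _ has, Set.sdiff_self,
      insert_empty_eq, Set.ncard_singleton]
  refine ⟨a, ⟨haQ, has⟩, hPs.trans (Set.subset_insert a s), hs.trans (.single (hP.mono hPs)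
    (hP.mono (hPs.trans (Set.subset_insert a s))) hstep (Set.ncard_le_ncard hsQ.le)
    (Set.ncard_le_ncard (Set.insert_subset haQ hsQ.le)))⟩

theorem reconfWithin_union (hP : IsTargetSet G τ P) (hQ : IsTargetSet G τ Q) :
    ReconfWithin G τ (P ∪ Q).ncard P Q :=
  (reconfWithin_of_subset hP Set.subset_union_left).trans
    (reconfWithin_of_subset hQ Set.subset_union_right).symm

end Reconfiguration

section GraphH

variable {V : Type*} {ℓ : ℕ} {d : V → ℕ}

instance : Finite GadVert :=
  Finite.of_surjective ![GadVert.t, .h, .b1, .b2] fun w => by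
    cases w
    exacts [⟨0, rfl⟩, ⟨1, rfl⟩, ⟨2, rfl⟩, ⟨3, rfl⟩]

instance [Finite V] : Finite (GadIdx V ℓ d) :=
  Finite.of_surjective (α := (V × Fin ℓ) ⊕ (Fin ℓ × Σ v, Fin (d v)) ⊕ (Σ v, Fin (d v)) ⊕
      (V × Fin ℓ) ⊕ (Fin ℓ × Σ v, Fin (d v)) ⊕ (Σ v, Fin (d v)))
    (Sum.elim (fun p => .vx p.1 p.2) <| Sum.elim (fun p => .xa p.1 p.2.1 p.2.2) <|
      Sum.elim (fun p => .av p.1 p.2) <| Sum.elim (fun p => .vy p.1 p.2) <|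
      Sum.elim (fun p => .yb p.1 p.2.1 p.2.2) (fun p => .bv p.1 p.2))
    fun D => by
      cases D
      exacts [⟨.inl (_, _), rfl⟩, ⟨.inr (.inl (_, ⟨_, _⟩)), rfl⟩, ⟨.inr (.inr (.inl ⟨_, _⟩)), rfl⟩,
        ⟨.inr (.inr (.inr (.inl (_, _)))), rfl⟩,
        ⟨.inr (.inr (.inr (.inr (.inl (_, ⟨_, _⟩))))), rfl⟩,
        ⟨.inr (.inr (.inr (.inr (.inr ⟨_, _⟩)))), rfl⟩]

instance [Finite V] : Finite (HVert V ℓ d) :=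
  Finite.of_surjective (α := V ⊕ Fin ℓ ⊕ Fin ℓ ⊕ (Σ v, Fin (d v)) ⊕ (Σ v, Fin (d v)) ⊕
      (GadIdx V ℓ d × GadVert))
    (Sum.elim .orig <| Sum.elim .xx <| Sum.elim .yy <| Sum.elim (fun p => .aa p.1 p.2) <|
      Sum.elim (fun p => .bb p.1 p.2) (fun p => .gad p.1 p.2))
    fun p => by
      cases p
      exacts [⟨.inl _, rfl⟩, ⟨.inr (.inl _), rfl⟩, ⟨.inr (.inr (.inl _)), rfl⟩,
        ⟨.inr (.inr (.inr (.inl ⟨_, _⟩))), rfl⟩, ⟨.inr (.inr (.inr (.inr (.inl ⟨_, _⟩)))), rfl⟩,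
        ⟨.inr (.inr (.inr (.inr (.inr (_, _))))), rfl⟩]

theorem ncard_XSet : (XSet V ℓ d).ncard = ℓ := by
  rw [XSet, Set.ncard_range_of_injective fun _ _ h => HVert.xx.inj h, Nat.card_fin]

theorem ncard_YSet : (YSet V ℓ d).ncard = ℓ := by
  rw [YSet, Set.ncard_range_of_injective fun _ _ h => HVert.yy.inj h, Nat.card_fin]

variable {G : SimpleGraph V}

theorem graphH_adj_of_hRel {p q : HVert V ℓ d} (hne : p ≠ q) (h : HRel G ℓ d p q) :
    (graphH G ℓ d).Adj p q :=
  ⟨hne, Or.inl h⟩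

def origHom : G →g graphH G ℓ d where
  toFun := HVert.orig
  map_rel' {u v} h := graphH_adj_of_hRel (by simp [h.ne]) (.inl ⟨u, v, h, rfl, rfl⟩)

theorem origHom_injective : Function.Injective (origHom : G →g graphH G ℓ d) :=
  fun _ _ h => HVert.orig.inj h

theorem graphH_adj_gadTail (D : GadIdx V ℓ d) : (graphH G ℓ d).Adj (.gad D .t) (gadTail D) :=
  (graphH_adj_of_hRel (by cases D <;> simp [gadTail])
    (.inr (.inr (.inr (.inl ⟨D, rfl, rfl⟩))))).symm

theorem graphH_adj_gadHead (D : GadIdx V ℓ d) : (graphH G ℓ d).Adj (gadHead D) (.gad D .h) :=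
  graphH_adj_of_hRel (by cases D <;> simp [gadHead]) (.inr (.inr (.inr (.inr ⟨D, rfl, rfl⟩))))

variable [Finite V] {τ : V → ℕ} {n : ℕ} {S : Set (HVert V ℓ d)}

theorem gad_mem_activeSet {D : GadIdx V ℓ d}
    (h : gadTail D ∈ activeSet (graphH G ℓ d) (tauH τ n ℓ d) S) (w : GadVert) :
    HVert.gad D w ∈ activeSet (graphH G ℓ d) (tauH τ n ℓ d) S := by
  have ht := mem_activeSet_of_adj _ _ h (graphH_adj_gadTail D) le_rfl
  have hb1 := mem_activeSet_of_adj _ _ ht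
    (graphH_adj_of_hRel (by simp) (.inr (.inl ⟨D, rfl, .inl rfl⟩))).symm le_rfl
  have hb2 := mem_activeSet_of_adj _ _ ht
    (graphH_adj_of_hRel (by simp) (.inr (.inl ⟨D, rfl, .inr rfl⟩))).symm le_rfl
  have hh : HVert.gad D .h ∈ activeSet (graphH G ℓ d) (tauH τ n ℓ d) S :=
    mem_activeSet_of_le_ncard _ _ (Set.pair_subset hb1 hb2)
      (Set.pair_subset (graphH_adj_of_hRel (by simp) (.inr (.inr (.inl ⟨D, rfl, .inl rfl⟩))))
        (graphH_adj_of_hRel (by simp) (.inr (.inr (.inl ⟨D, rfl, .inr rfl⟩)))))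
      (by rw [Set.ncard_pair (by simp)]; rfl)
  cases w
  exacts [ht, hh, hb1, hb2]

theorem mem_activeSet_of_gadgets {ι : Type*} {p : HVert V ℓ d} (f : ι → GadIdx V ℓ d)
    (hf : Function.Injective f) (hhead : ∀ i, gadHead (f i) = p)
    (htail : ∀ i, gadTail (f i) ∈ activeSet (graphH G ℓ d) (tauH τ n ℓ d) S)
    (hτ : tauH τ n ℓ d p ≤ Nat.card ι) : p ∈ activeSet (graphH G ℓ d) (tauH τ n ℓ d) S :=
  mem_activeSet_of_injective _ _ (fun i => HVert.gad (f i) .h)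
    (fun _ _ h => hf (HVert.gad.inj h).1) (fun i => gad_mem_activeSet (htail i) .h)
    (fun i => hhead i ▸ graphH_adj_gadHead (f i)) hτ

theorem aa_mem_activeSet_of_forall_xx
    (h : ∀ i, HVert.xx i ∈ activeSet (graphH G ℓ d) (tauH τ n ℓ d) S) (v : V) (j : Fin (d v)) :
    HVert.aa v j ∈ activeSet (graphH G ℓ d) (tauH τ n ℓ d) S :=
  mem_activeSet_of_gadgets (fun i => GadIdx.xa i v j) (fun _ _ h => (GadIdx.xa.inj h).1)
    (fun _ => rfl) h (Nat.card_fin ℓ).ge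

theorem bb_mem_activeSet_of_forall_yy
    (h : ∀ i, HVert.yy i ∈ activeSet (graphH G ℓ d) (tauH τ n ℓ d) S) (v : V) (j : Fin (d v)) :
    HVert.bb v j ∈ activeSet (graphH G ℓ d) (tauH τ n ℓ d) S :=
  mem_activeSet_of_gadgets (fun i => GadIdx.yb i v j) (fun _ _ h => (GadIdx.yb.inj h).1)
    (fun _ => rfl) h (Nat.card_fin ℓ).ge

theorem orig_mem_activeSet_of_forall_xx (hτd : ∀ v, τ v ≤ d v)
    (h : ∀ i, HVert.xx i ∈ activeSet (graphH G ℓ d) (tauH τ n ℓ d) S) (v : V) :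
    HVert.orig v ∈ activeSet (graphH G ℓ d) (tauH τ n ℓ d) S :=
  mem_activeSet_of_gadgets (GadIdx.av v) (fun _ _ h => eq_of_heq (GadIdx.av.inj h).2)
    (fun _ => rfl) (aa_mem_activeSet_of_forall_xx h v) ((hτd v).trans (Nat.card_fin _).ge)

theorem orig_mem_activeSet_of_forall_yy (hτd : ∀ v, τ v ≤ d v)
    (h : ∀ i, HVert.yy i ∈ activeSet (graphH G ℓ d) (tauH τ n ℓ d) S) (v : V) :
    HVert.orig v ∈ activeSet (graphH G ℓ d) (tauH τ n ℓ d) S :=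
  mem_activeSet_of_gadgets (GadIdx.bv v) (fun _ _ h => eq_of_heq (GadIdx.bv.inj h).2)
    (fun _ => rfl) (bb_mem_activeSet_of_forall_yy h v) ((hτd v).trans (Nat.card_fin _).ge)

theorem xx_mem_activeSet_of_forall_orig (hn : n ≤ Nat.card V)
    (h : ∀ v, HVert.orig v ∈ activeSet (graphH G ℓ d) (tauH τ n ℓ d) S) (i : Fin ℓ) :
    HVert.xx i ∈ activeSet (graphH G ℓ d) (tauH τ n ℓ d) S :=
  mem_activeSet_of_gadgets (fun v => GadIdx.vx v i) (fun _ _ h => (GadIdx.vx.inj h).1)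
    (fun _ => rfl) h hn

theorem yy_mem_activeSet_of_forall_orig (hn : n ≤ Nat.card V)
    (h : ∀ v, HVert.orig v ∈ activeSet (graphH G ℓ d) (tauH τ n ℓ d) S) (i : Fin ℓ) :
    HVert.yy i ∈ activeSet (graphH G ℓ d) (tauH τ n ℓ d) S :=
  mem_activeSet_of_gadgets (fun v => GadIdx.vy v i) (fun _ _ h => (GadIdx.vy.inj h).1)
    (fun _ => rfl) h hn

theorem isTargetSet_of_forall_orig (hn : n ≤ Nat.card V)
    (h : ∀ v, HVert.orig v ∈ activeSet (graphH G ℓ d) (tauH τ n ℓ d) S) :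
    IsTargetSet (graphH G ℓ d) (tauH τ n ℓ d) S := by
  have hx := xx_mem_activeSet_of_forall_orig hn h
  have hy := yy_mem_activeSet_of_forall_orig hn h
  have ha := aa_mem_activeSet_of_forall_xx hx
  have hb := bb_mem_activeSet_of_forall_yy hy
  have htail (D : GadIdx V ℓ d) : gadTail D ∈ activeSet (graphH G ℓ d) (tauH τ n ℓ d) S := by
    cases D
    exacts [h _, hx _, ha _ _, h _, hy _, hb _ _]
  refine Set.eq_univ_of_forall fun p => ?_
  cases p
  exacts [h _, hx _, hy _, ha _ _, hb _ _, gad_mem_activeSet (htail _) _]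

theorem isTargetSet_XSet (hτd : ∀ v, τ v ≤ d v) (hn : n ≤ Nat.card V) :
    IsTargetSet (graphH G ℓ d) (tauH τ n ℓ d) (XSet V ℓ d) :=
  isTargetSet_of_forall_orig hn <| orig_mem_activeSet_of_forall_xx hτd fun i =>
    subset_activeSet _ _ _ ⟨i, rfl⟩

theorem isTargetSet_YSet (hτd : ∀ v, τ v ≤ d v) (hn : n ≤ Nat.card V) :
    IsTargetSet (graphH G ℓ d) (tauH τ n ℓ d) (YSet V ℓ d) :=
  isTargetSet_of_forall_orig hn <| orig_mem_activeSet_of_forall_yy hτd fun i =>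
    subset_activeSet _ _ _ ⟨i, rfl⟩

theorem isTargetSet_image_orig (hn : n ≤ Nat.card V) {S₀ : Set V} (hS₀ : IsTargetSet G τ S₀) :
    IsTargetSet (graphH G ℓ d) (tauH τ n ℓ d) (HVert.orig '' S₀) :=
  isTargetSet_of_forall_orig hn fun v =>
    image_activeSet_subset G τ origHom origHom_injective (fun _ => le_rfl) S₀
      ⟨v, hS₀ ▸ Set.mem_univ v, rfl⟩

end GraphH

end TSS

open TSS in
theorem stmt6_general {V : Type*} [Fintype V] (G : SimpleGraph V) [DecidableRel G.Adj] (τ : V → ℕ)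
    (ℓ : ℕ) (hτ : ∀ v : V, τ v ≤ G.degree v)
    (kc : ℕ) (hopt : optTS G τ ≤ kc) :
    optReconf (graphH G ℓ (fun v => G.degree v)) (tauH τ (Fintype.card V) ℓ (fun v => G.degree v))
      (XSet V ℓ (fun v => G.degree v)) (YSet V ℓ (fun v => G.degree v)) ≤ kc + ℓ := by
  obtain ⟨S₀, hS₀, hcard⟩ := exists_isTargetSet_ncard_le hopt
  have hn : Fintype.card V ≤ Nat.card V := Nat.card_eq_fintype_card.ge
  have hS := isTargetSet_image_orig (ℓ := ℓ) (d := fun v => G.degree v) hn hS₀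
  have hScard : (HVert.orig '' S₀ : Set (HVert V ℓ fun v => G.degree v)).ncard ≤ kc := by
    rwa [Set.ncard_image_of_injective _ fun _ _ h => HVert.orig.inj h]
  have hX := ncard_XSet (V := V) (ℓ := ℓ) (d := fun v => G.degree v)
  have hY := ncard_YSet (V := V) (ℓ := ℓ) (d := fun v => G.degree v)
  refine optReconf_le (.trans ((reconfWithin_union (isTargetSet_XSet hτ hn) hS).mono ?_)
    ((reconfWithin_union hS (isTargetSet_YSet hτ hn)).mono ?_)) <;>
  exact (Set.ncard_union_le _ _).trans (by omega)

open TSS in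
/-- Completeness: if `opt(G) ≤ k_c`, then `opt_H(X ⇝ Y) ≤ k_c + ℓ`. -/
theorem stmt6 {V : Type*} [Fintype V] (G : SimpleGraph V) [DecidableRel G.Adj] (τ : V → ℕ)
    (ℓ : ℕ) (hℓ : 1 ≤ ℓ) (hiso : ∀ v : V, 0 < G.degree v) (hτ : ∀ v : V, τ v ≤ G.degree v)
    (kc : ℕ) (hopt : optTS G τ ≤ kc) :
    optReconf (graphH G ℓ (fun v => G.degree v)) (tauH τ (Fintype.card V) ℓ (fun v => G.degree v))
      (XSet V ℓ (fun v => G.degree v)) (YSet V ℓ (fun v => G.degree v)) ≤ kc + ℓ :=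
  stmt6_general G τ ℓ hτ kc hopt
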